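/- arXiv:1609.05352 — 3 statements merged into one kernel-verified Lean document; each statement's English description precedes it below -/
import Mathlib

section
/- Let T̂ = P·T as above and r ≥ 1. If x, y, z ∈ {0,…,n−1} satisfy w(x)+1 = w(y) and w(y)+1 = w(z), then the set difference {j : (T̂)^r(y,j) > 0} \ {j : (T̂)^r(x,j) > 0} is a subset of {j : (T̂)^r(z,j) > 0}. -/
/-
Row `y` of `T̂` is supported on `{w y, w y - 1} = {w y, w x}`. Since row `x` of `T̂` contains `w x`
and row `z` contains `w z - 1 = w y`, every positive entry of row `y` of `T̂ * M` is also positive in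
row `x` or in row `z` of `T̂ * M`, for any nonnegative `M`; take `M = T̂ ^ (r - 1)`.
-/

open Matrix Finset

/-- Lower bidiagonal 0-1 matrix: T(i,j)=1 iff i=j or i=j+1. -/
def Tmat (n : ℕ) : Matrix (Fin n) (Fin n) ℕ :=
  Matrix.of fun i j => if (i : ℕ) = (j : ℕ) ∨ (i : ℕ) = (j : ℕ) + 1 then 1 else 0

/-- Permutation matrix of w: P(i,j)=1 iff j = w(i). -/
def Pmat {n : ℕ} (w : Fin n → Fin n) : Matrix (Fin n) (Fin n) ℕ :=
  Matrix.of fun i j => if j = w i then 1 else 0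

/-- T̂ = P · T. -/
def That {n : ℕ} (w : Fin n → Fin n) : Matrix (Fin n) (Fin n) ℕ :=
  Pmat w * Tmat n

namespace Matrix

variable {R l m o : Type*} [CommSemiring R] [PartialOrder R] [CanonicallyOrderedAdd R]
  [NoZeroDivisors R] [Fintype m]

theorem mul_apply_pos_iff (A : Matrix l m R) (B : Matrix m o R) (i : l) (j : o) :
    0 < (A * B) i j ↔ ∃ k, 0 < A i k ∧ 0 < B k j := by
  simp only [mul_apply, Finset.sum_pos_iff, Finset.mem_univ, true_and,
    CanonicallyOrderedAdd.mul_pos]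

theorem mul_apply_pos_of_row_support_subset {A : Matrix l m R} (B : Matrix m o R) {x y z : l}
    (hA : ∀ k, 0 < A y k → 0 < A x k ∨ 0 < A z k) {j : o} (hy : 0 < (A * B) y j)
    (hx : ¬ 0 < (A * B) x j) : 0 < (A * B) z j := by
  rw [mul_apply_pos_iff] at hy hx ⊢
  obtain ⟨k, hyk, hkj⟩ := hy
  exact ⟨k, (hA k hyk).resolve_left fun hxk ↦ hx ⟨k, hxk, hkj⟩, hkj⟩

end Matrix

theorem That_apply_pos_iff {n : ℕ} (w : Fin n → Fin n) (i k : Fin n) :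
    0 < That w i k ↔ k = w i ∨ (k : ℕ) + 1 = w i := by
  have hrow : That w i k = Tmat n (w i) k := by
    simp [That, Pmat, mul_apply]
  rw [hrow, Tmat, of_apply, Fin.ext_iff]
  split_ifs <;> omega

theorem stmt_2_general (n : ℕ) (w : Fin n → Fin n)
    (r : ℕ) (hr : 1 ≤ r) (x y z : Fin n)
    (hxy : (w x : ℕ) + 1 = (w y : ℕ)) (hyz : (w y : ℕ) + 1 = (w z : ℕ)) :
    ({j : Fin n | 0 < (That w ^ r) y j} \ {j : Fin n | 0 < (That w ^ r) x j})
      ⊆ {j : Fin n | 0 < (That w ^ r) z j} := by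
  obtain ⟨s, rfl⟩ := Nat.exists_eq_add_of_le' hr
  rintro j ⟨hy, hx⟩
  rw [Set.mem_ofPred_eq, pow_succ'] at hy hx ⊢
  refine mul_apply_pos_of_row_support_subset _ (fun k hk ↦ ?_) hy hx
  simp only [That_apply_pos_iff, Fin.ext_iff] at hk ⊢
  omega

theorem stmt_2 (n : ℕ) (hn : 1 ≤ n) (w : Fin n → Fin n) (hw : Function.Bijective w)
    (r : ℕ) (hr : 1 ≤ r) (x y z : Fin n)
    (hxy : (w x : ℕ) + 1 = (w y : ℕ)) (hyz : (w y : ℕ) + 1 = (w z : ℕ)) :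
    ({j : Fin n | 0 < (That w ^ r) y j} \ {j : Fin n | 0 < (That w ^ r) x j})
      ⊆ {j : Fin n | 0 < (That w ^ r) z j} :=
  stmt_2_general n w r hr x y z hxy hyz
end

section
/- Let T̂ = P·T as above and r ≥ 1. For the row x with w(x) = 0, the number of nonzero entries of row x of (T̂)^r is at most 2^{r−1}. -/
/-!
A nonzero entry `(A * B) i j` over a semiring needs some `k` with `A i k ≠ 0` and `B k j ≠ 0`, so
the number of nonzero entries in row `i` of `A * B` is at most that of row `i` of `A` times the
maximal row count of `B`. Every row of `T̂` is a row of the bidiagonal `T`, hence has at most two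
nonzero entries, while row `x` of `T̂` is row `0` of `T`, which has only one. Writing
`T̂ ^ (m + 1) = T̂ * T̂ ^ m` gives the bound `1 * 2 ^ m`.
-/

open Matrix Finset

namespace Matrix

variable {l m n α : Type*} [Fintype n] [DecidableEq α]

def rowSupport [Zero α] (A : Matrix l n α) (i : l) : Finset n :=
  {j | A i j ≠ 0}

@[simp]
theorem mem_rowSupport [Zero α] {A : Matrix l n α} {i : l} {j : n} :
    j ∈ A.rowSupport i ↔ A i j ≠ 0 := by
  simp [rowSupport]

theorem rowSupport_mul_subset [Fintype m] [DecidableEq n] [NonUnitalNonAssocSemiring α]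
    (A : Matrix l m α) (B : Matrix m n α) (i : l) :
    (A * B).rowSupport i ⊆ (A.rowSupport i).biUnion B.rowSupport := by
  intro j hj
  rw [mem_rowSupport, mul_apply] at hj
  obtain ⟨k, -, hk⟩ := exists_ne_zero_of_sum_ne_zero hj
  exact mem_biUnion.2 ⟨k, mem_rowSupport.2 (left_ne_zero_of_mul hk),
    mem_rowSupport.2 (right_ne_zero_of_mul hk)⟩

theorem card_rowSupport_mul_le [Fintype m] [DecidableEq n] [NonUnitalNonAssocSemiring α]
    (A : Matrix l m α) {B : Matrix m n α} {c : ℕ} (hB : ∀ k, #(B.rowSupport k) ≤ c) (i : l) :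
    #((A * B).rowSupport i) ≤ #(A.rowSupport i) * c :=
  (card_le_card (rowSupport_mul_subset A B i)).trans
    (card_biUnion_le_card_mul _ _ _ fun k _ => hB k)

theorem card_rowSupport_one_le [DecidableEq n] [Zero α] [One α] (i : n) :
    #((1 : Matrix n n α).rowSupport i) ≤ 1 :=
  (card_le_card fun _ hj => mem_singleton.2 <|
    not_not.1 fun h => mem_rowSupport.1 hj (one_apply_ne' h)).trans (card_singleton i).le

theorem card_rowSupport_pow_le [DecidableEq n] [Semiring α] {A : Matrix n n α} {c : ℕ}
    (hA : ∀ k, #(A.rowSupport k) ≤ c) (r : ℕ) (i : n) :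
    #((A ^ r).rowSupport i) ≤ c ^ r := by
  induction r generalizing i with
  | zero => simpa using card_rowSupport_one_le i
  | succ r ih =>
    rw [pow_succ, pow_succ]
    exact (card_rowSupport_mul_le _ hA i).trans (Nat.mul_le_mul_right c (ih i))

end Matrix

theorem That_apply {n : ℕ} (w : Fin n → Fin n) (i j : Fin n) :
    That w i j = Tmat n (w i) j := by
  simp [That, Pmat, mul_apply, ite_mul, sum_ite_eq']

theorem rowSupport_That {n : ℕ} (w : Fin n → Fin n) (i : Fin n) :
    (That w).rowSupport i = (Tmat n).rowSupport (w i) := by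
  ext j
  simp only [mem_rowSupport, That_apply]

theorem mem_Tmat_rowSupport {n : ℕ} {i j : Fin n} :
    j ∈ (Tmat n).rowSupport i ↔ (i : ℕ) = j ∨ (i : ℕ) = j + 1 := by
  simp [Tmat, or_iff_not_imp_left]

theorem card_Tmat_rowSupport_le_two {n : ℕ} (i : Fin n) : #((Tmat n).rowSupport i) ≤ 2 := by
  refine (card_le_card fun j hj => ?_).trans (card_le_two (a := i) (b := ⟨i - 1, by omega⟩))
  simp only [mem_insert, mem_singleton, Fin.ext_iff]
  have := mem_Tmat_rowSupport.1 hj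
  omega

theorem card_Tmat_rowSupport_le_one {n : ℕ} {i : Fin n} (hi : (i : ℕ) = 0) :
    #((Tmat n).rowSupport i) ≤ 1 := by
  refine (card_le_card fun j hj => ?_).trans (card_singleton i).le
  rw [mem_singleton, Fin.ext_iff]
  have := mem_Tmat_rowSupport.1 hj
  omega

theorem card_That_rowSupport_le_two {n : ℕ} (w : Fin n → Fin n) (i : Fin n) :
    #((That w).rowSupport i) ≤ 2 := by
  rw [rowSupport_That]
  exact card_Tmat_rowSupport_le_two _

theorem stmt_5_general (n : ℕ) (w : Fin n → Fin n)
    (r : ℕ) (x : Fin n) (hx : (w x : ℕ) = 0) :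
    (Finset.univ.filter fun j => 0 < (That w ^ r) x j).card ≤ 2 ^ (r - 1) := by
  simp only [Nat.pos_iff_ne_zero]
  change #((That w ^ r).rowSupport x) ≤ _
  cases r with
  | zero => exact card_rowSupport_one_le x
  | succ m =>
    calc #((That w ^ (m + 1)).rowSupport x)
        = #((That w * That w ^ m).rowSupport x) := by rw [pow_succ']
      _ ≤ #((That w).rowSupport x) * 2 ^ m :=
        card_rowSupport_mul_le _ (card_rowSupport_pow_le (card_That_rowSupport_le_two w) m) x
      _ ≤ 1 * 2 ^ m := by
        rw [rowSupport_That]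
        exact Nat.mul_le_mul_right _ (card_Tmat_rowSupport_le_one hx)
      _ = 2 ^ (m + 1 - 1) := by simp

theorem stmt_5 (n : ℕ) (hn : 1 ≤ n) (w : Fin n → Fin n) (hw : Function.Bijective w)
    (r : ℕ) (hr : 1 ≤ r) (x : Fin n) (hx : (w x : ℕ) = 0) :
    (Finset.univ.filter fun j => 0 < (That w ^ r) x j).card ≤ 2 ^ (r - 1) :=
  stmt_5_general n w r x hx
end

section
/- Monotonicity of influence sets in the number of rounds via row sums: for T̂ = P·T and any r ≥ 1 and row i, |{j : (T̂)^{r+1}(i,j)>0}| ≤ 2·|{j : (T̂)^r(i,j)>0}|. -/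
open Matrix Finset

lemma That_apply_s17 {n : ℕ} (w : Fin n → Fin n) (k j : Fin n) :
    That w k j = if (w k : ℕ) = (j : ℕ) ∨ (w k : ℕ) = (j : ℕ) + 1 then 1 else 0 := by
  simp only [That, Pmat, Tmat, Matrix.mul_apply, Matrix.of_apply, mul_ite, mul_one, mul_zero]
  rw [Finset.sum_eq_single (w k)]
  · simp
  · intro x _ hx; simp [hx]
  · simp

lemma row_card_le_two {n : ℕ} (w : Fin n → Fin n) (k : Fin n) :
    (Finset.univ.filter fun j => 0 < That w k j).card ≤ 2 := by
  classical
  have h : (Finset.univ.filter fun j => 0 < That w k j).card ≤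
      ({(w k : ℕ), (w k : ℕ) - 1} : Finset ℕ).card := by
    refine Finset.card_le_card_of_injOn (fun j => (j : ℕ)) ?_ ?_
    · intro j hj
      simp only [Finset.mem_filter, Finset.mem_univ, true_and, That_apply_s17] at hj
      rcases (by by_contra hc; simp [hc] at hj :
          (w k : ℕ) = (j : ℕ) ∨ (w k : ℕ) = (j : ℕ) + 1) with h1 | h2
      · simp [h1.symm]
      · simp [Finset.mem_insert]; right; omega
    · intro a _ b _ hab; exact Fin.val_injective hab
  calc _ ≤ _ := h
    _ ≤ 2 := by
        apply le_trans (Finset.card_insert_le _ _)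
        simp
theorem stmt_17 (n : ℕ) (hn : 1 ≤ n) (w : Fin n → Fin n) (hw : Function.Bijective w)
    (r : ℕ) (hr : 1 ≤ r) (i : Fin n) :
    (Finset.univ.filter fun j => 0 < (That w ^ (r + 1)) i j).card ≤
      2 * (Finset.univ.filter fun j => 0 < (That w ^ r) i j).card := by
  classical
  set S := Finset.univ.filter fun j => 0 < (That w ^ r) i j with hS
  have hsub : (Finset.univ.filter fun j => 0 < (That w ^ (r + 1)) i j) ⊆
      S.biUnion (fun k => Finset.univ.filter fun j => 0 < That w k j) := by
    intro j hj
    simp only [Finset.mem_filter, Finset.mem_univ, true_and] at hj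
    rw [pow_succ, Matrix.mul_apply] at hj
    have : ∃ k, 0 < (That w ^ r) i k * That w k j := by
      by_contra hc
      push_neg at hc
      simp only [Nat.le_zero] at hc
      simp [Finset.sum_eq_zero (fun k _ => hc k)] at hj
    obtain ⟨k, hk⟩ := this
    have h1 : 0 < (That w ^ r) i k := Nat.pos_of_mul_pos_left (by rwa [mul_comm] at hk)
    have h2 : 0 < That w k j := Nat.pos_of_mul_pos_left hk
    exact Finset.mem_biUnion.2 ⟨k, by simp [hS, h1], by simp [h2]⟩
  calc (Finset.univ.filter fun j => 0 < (That w ^ (r + 1)) i j).card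
      ≤ (S.biUnion (fun k => Finset.univ.filter fun j => 0 < That w k j)).card :=
        Finset.card_le_card hsub
    _ ≤ ∑ k ∈ S, (Finset.univ.filter fun j => 0 < That w k j).card :=
        Finset.card_biUnion_le
    _ ≤ ∑ _k ∈ S, 2 := Finset.sum_le_sum (fun k _ => row_card_le_two w k)
    _ = 2 * S.card := by rw [Finset.sum_const, smul_eq_mul, mul_comm]
end
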